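/- For any integer n ≥ 2 and any integer c, the number φ_2(n, c) of pairs of exceptional units of ℤ_n summing to c modulo n equals the product over all prime powers p^α exactly dividing n of φ^{∗∗}(p^α, c), where φ^{∗∗}(2^α, c) = 0; φ^{∗∗}(3^α, c) = 3^{α-1} if c ≡ 1 (mod 3) and 0 otherwise; and for p ≥ 5, φ^{∗∗}(p^α, c) = p^{α-1}(p-2) if c ≡ 1 (mod p), p^{α-1}(p-3) if c ≡ 0 (mod p) or c ≡ 2 (mod p), and p^{α-1}(p-4) otherwise. -/

import Mathlib

/-!
By the Chinese remainder theorem `ℤ_n ≅ ∏ ℤ_{p^α}`, and being an exceptional unit can be checked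
componentwise, so `φ₂(·, c)` is multiplicative. In `ℤ_{p^α}` an element is a unit iff its residue
mod `p` is nonzero, so `x` and `c - x` are both exceptional iff `x mod p` avoids `{0, 1, c, c - 1}`;
every residue has `p^(α-1)` lifts, and the avoided set has 2, 3 or 4 elements according as
`c ≡ 1`, `c ≡ 0, 2` or otherwise (for `p = 2` it is all of `ℤ_2`).
-/

/-- `phi k n c` is the number of `k`-tuples of exceptional units of `ℤ/nℤ`
(i.e. elements `u` with both `u` and `1 - u` units) summing to `c` modulo `n`. -/
noncomputable def phi (k n : ℕ) (c : ℤ) : ℕ :=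
  Nat.card {x : Fin k → ZMod n //
    (∀ i, IsUnit (x i) ∧ IsUnit (1 - x i)) ∧ ∑ i, x i = (c : ZMod n)}

/-- Sander's function `φ**(p^α, c)` on prime powers. -/
def phiStar (p α : ℕ) (c : ℤ) : ℕ :=
  if p = 2 then 0
  else if p = 3 then (if c % 3 = 1 then 3 ^ (α - 1) else 0)
  else if c % p = 1 then p ^ (α - 1) * (p - 2)
  else if c % p = 0 ∨ c % p = 2 then p ^ (α - 1) * (p - 3)
  else p ^ (α - 1) * (p - 4)

open Finset

def finTwoSumEquiv {R : Type*} [AddCommGroup R] (P : R → Prop) (c : R) :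
    {x : Fin 2 → R // (∀ i, P (x i)) ∧ ∑ i, x i = c} ≃ {a : R // P a ∧ P (c - a)} where
  toFun x := ⟨x.1 0, x.2.1 0, by simpa [← x.2.2, Fin.sum_univ_two] using x.2.1 1⟩
  invFun a := ⟨![a.1, c - a.1], by simp [Fin.forall_fin_two, a.2], by simp⟩
  left_inv x := by ext i; fin_cases i <;> simp [← x.2.2, Fin.sum_univ_two]
  right_inv a := rfl

theorem card_filter_map_mem_mul_card {G H F : Type*} [AddGroup G] [Fintype G] [AddGroup H]
    [Fintype H] [DecidableEq H] [FunLike F G H] [AddMonoidHomClass F G H] (f : F)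
    (hf : Function.Surjective f) (t : Finset H) :
    #{g | f g ∈ t} * Fintype.card H = #t * Fintype.card G := by
  have hfiber (y : H) : #{g | f g = y} = #{g | f g = 0} :=
    AddMonoidHom.card_fiber_eq_of_mem_range f (hf y) (hf 0)
  have hsum (t : Finset H) : #{g | f g ∈ t} = #t * #{g | f g = 0} := by
    rw [← sum_card_fiberwise_eq_card_filter, sum_congr rfl fun y _ => hfiber y, sum_const,
      smul_eq_mul]
  have hcard : Fintype.card G = Fintype.card H * #{g | f g = 0} := by
    simpa using hsum univ
  rw [hsum, hcard]; ring

section ExceptionalUnit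

variable {R S : Type*} [Ring R] [Ring S]

def IsExceptionalUnit (x : R) : Prop :=
  IsUnit x ∧ IsUnit (1 - x)

variable (R) in
noncomputable def exceptionalPairCount (c : R) : ℕ :=
  Nat.card {x : R // IsExceptionalUnit x ∧ IsExceptionalUnit (c - x)}

theorem phi_two_eq_exceptionalPairCount (n : ℕ) (c : ℤ) :
    phi 2 n c = exceptionalPairCount (ZMod n) c :=
  Nat.card_congr (finTwoSumEquiv IsExceptionalUnit _)

theorem IsExceptionalUnit.map_iff (e : R ≃+* S) {x : R} :
    IsExceptionalUnit (e x) ↔ IsExceptionalUnit x := by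
  simp only [IsExceptionalUnit, ← map_one e, ← map_sub, isUnit_map_iff]

theorem Pi.isExceptionalUnit_iff {ι : Type*} {A : ι → Type*} [∀ i, Ring (A i)]
    {x : ∀ i, A i} : IsExceptionalUnit x ↔ ∀ i, IsExceptionalUnit (x i) := by
  simp only [IsExceptionalUnit, Pi.isUnit_iff, Pi.sub_apply, Pi.one_apply, forall_and]

theorem exceptionalPairCount_congr (e : R ≃+* S) (c : R) :
    exceptionalPairCount R c = exceptionalPairCount S (e c) :=
  Nat.card_congr <| e.toEquiv.subtypeEquiv fun x => by
    simp [← map_sub, IsExceptionalUnit.map_iff]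

theorem exceptionalPairCount_pi {ι : Type*} [Fintype ι] {A : ι → Type*} [∀ i, Ring (A i)]
    (c : ∀ i, A i) :
    exceptionalPairCount (∀ i, A i) c = ∏ i, exceptionalPairCount (A i) (c i) := by
  simp only [exceptionalPairCount]
  rw [← Nat.card_pi]
  refine Nat.card_congr <| (Equiv.subtypeEquivRight fun x => ?_).trans Equiv.subtypePiEquivPi
  simp only [Pi.isExceptionalUnit_iff, Pi.sub_apply, forall_and]

theorem exceptionalPairCount_mul_card_of_isUnit_iff [Fintype R] {F : Type*} [Ring F] [Fintype F]
    [DecidableEq F] (f : R →+* F) (hf : Function.Surjective f)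
    (hunit : ∀ x, IsUnit x ↔ f x ≠ 0) (c : R) :
    exceptionalPairCount R c * Fintype.card F =
      (Fintype.card F - #{0, 1, f c, f c - 1}) * Fintype.card R := by
  have hmem (x : R) : IsExceptionalUnit x ∧ IsExceptionalUnit (c - x) ↔
      f x ∈ ({0, 1, f c, f c - 1} : Finset F)ᶜ := by
    simp only [IsExceptionalUnit, hunit, map_sub, map_one]
    rw [show (1 : F) - (f c - f x) = f x - (f c - 1) by abel]
    simp only [mem_compl, mem_insert, mem_singleton, sub_ne_zero]
    tauto
  rw [exceptionalPairCount, Nat.card_congr (Equiv.subtypeEquivRight hmem),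
    Nat.card_eq_fintype_card, Fintype.card_subtype,
    card_filter_map_mem_mul_card f hf, card_compl]

end ExceptionalUnit

theorem ZMod.isUnit_iff_castHom_ne_zero {p α : ℕ} (hp : p.Prime) (hα : α ≠ 0)
    (x : ZMod (p ^ α)) : IsUnit x ↔ castHom (dvd_pow_self p hα) (ZMod p) x ≠ 0 := by
  have : NeZero (p ^ α) := ⟨pow_ne_zero α hp.ne_zero⟩
  obtain ⟨m, rfl⟩ := natCast_zmod_surjective x
  rw [map_natCast, isUnit_natCast_iff_not_dvd_pow hp (Nat.pos_of_ne_zero hα), Ne,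
    natCast_eq_zero_iff]

theorem exceptionalPairCount_zmod_primePow {p α : ℕ} (hp : p.Prime) (hα : α ≠ 0) (c : ℤ) :
    exceptionalPairCount (ZMod (p ^ α)) c =
      p ^ (α - 1) * (p - #({0, 1, (c : ZMod p), (c : ZMod p) - 1} : Finset (ZMod p))) := by
  have : NeZero (p ^ α) := ⟨pow_ne_zero α hp.ne_zero⟩
  have : NeZero p := ⟨hp.ne_zero⟩
  have hcount := exceptionalPairCount_mul_card_of_isUnit_iff _ (ZMod.castHom_surjective _)
    (ZMod.isUnit_iff_castHom_ne_zero hp hα) (c : ZMod (p ^ α))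
  rw [map_intCast, ZMod.card, ZMod.card] at hcount
  apply Nat.eq_of_mul_eq_mul_right hp.pos
  rw [hcount, ← Nat.sub_one_add_one hα, pow_succ, Nat.add_sub_cancel]
  ring

theorem card_zero_one_self_sub_one {F : Type*} [Field F] [DecidableEq F] (h2 : (2 : F) ≠ 0)
    (c : F) :
    #({0, 1, c, c - 1} : Finset F) = if c = 1 then 2 else if c = 0 ∨ c = 2 then 3 else 4 := by
  have hm1 : (-1 : F) ≠ 1 := fun h => h2 (by linear_combination -h)
  have h21 : (2 : F) ≠ 1 := fun h => one_ne_zero (by linear_combination h)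
  split_ifs with h1 h02
  · subst h1; simp
  · obtain rfl | rfl := h02
    · simp [card_insert_of_notMem, hm1.symm]
    · norm_num [card_insert_of_notMem, h2.symm, card_pair h21]
  · push Not at h02
    have h0 : (0 : F) ≠ c - 1 := fun h => h1 (by linear_combination -h)
    have h1' : (1 : F) ≠ c - 1 := fun h => h02.2 (by linear_combination -h)
    have hc : c ≠ c - 1 := fun h => one_ne_zero (by linear_combination h)
    rw [card_insert_of_notMem, card_insert_of_notMem, card_pair hc]
    · simp [h1', Ne.symm h1]
    · simp [h0, Ne.symm h02.1]

theorem ZMod.intCast_eq_natCast_iff_emod {p r : ℕ} (hr : r < p) (c : ℤ) :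
    (c : ZMod p) = r ↔ c % p = r := by
  rw [← Int.cast_natCast, ZMod.intCast_eq_intCast_iff',
    Int.emod_eq_of_lt (a := (r : ℤ)) (by omega) (by omega)]

theorem phiStar_eq {p : ℕ} (hp : p.Prime) (α : ℕ) (c : ℤ) :
    phiStar p α c =
      p ^ (α - 1) * (p - #({0, 1, (c : ZMod p), (c : ZMod p) - 1} : Finset (ZMod p))) := by
  by_cases hp2 : p = 2
  · subst hp2
    have : 2 ≤ #({0, 1, (c : ZMod 2), (c : ZMod 2) - 1} : Finset (ZMod 2)) :=
      (card_pair zero_ne_one).symm.le.trans (card_le_card (by simp [insert_subset_iff]))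
    simp [phiStar, Nat.sub_eq_zero_of_le this]
  have : Fact p.Prime := ⟨hp⟩
  have hp2' : 2 < p := lt_of_le_of_ne hp.two_le (Ne.symm hp2)
  have h2 : (2 : ZMod p) ≠ 0 := by
    rw [Ne, ← Nat.cast_ofNat, ZMod.natCast_eq_zero_iff]
    exact fun h => hp2 ((Nat.prime_dvd_prime_iff_eq hp Nat.prime_two).1 h)
  have e0 : (c : ZMod p) = 0 ↔ c % p = 0 := by
    exact_mod_cast ZMod.intCast_eq_natCast_iff_emod (r := 0) (by omega) c
  have e1 : (c : ZMod p) = 1 ↔ c % p = 1 := by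
    exact_mod_cast ZMod.intCast_eq_natCast_iff_emod (r := 1) (by omega) c
  have e2 : (c : ZMod p) = 2 ↔ c % p = 2 := by
    exact_mod_cast ZMod.intCast_eq_natCast_iff_emod (r := 2) hp2' c
  simp only [card_zero_one_self_sub_one h2, e0, e1, e2]
  unfold phiStar
  by_cases hp3 : p = 3
  -- truncated subtraction: `3 - 3 = 3 - 4 = 0`
  · subst hp3
    split_ifs <;> simp_all
  · split_ifs <;> rfl

theorem sander_theorem (n : ℕ) (hn : 2 ≤ n) (c : ℤ) :
    phi 2 n c = ∏ p ∈ n.primeFactors, phiStar p (n.factorization p) c := by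
  have hn0 : n ≠ 0 := by omega
  rw [phi_two_eq_exceptionalPairCount, exceptionalPairCount_congr (ZMod.equivPi (n := n) hn0),
    map_intCast, exceptionalPairCount_pi, ← prod_coe_sort n.primeFactors]
  refine Fintype.prod_congr _ _ fun p => ?_
  have hp := Nat.prime_of_mem_primeFactors p.2
  have hα := (hp.factorization_pos_of_dvd hn0 (Nat.dvd_of_mem_primeFactors p.2)).ne'
  rw [Pi.intCast_apply, exceptionalPairCount_zmod_primePow hp hα, phiStar_eq hp]
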